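/- arXiv:math/0204340 — 5 statements merged into one kernel-verified Lean document; each statement's English description precedes it below -/
import Mathlib

section
/- Let H' and H be Hilbert spaces, l : H' → H a continuous linear Fredholm map, and c : H' → H a compact map (i.e., c maps bounded sets into relatively compact sets). Then the restriction of f = l + c to any closed and bounded subset A' ⊆ H' is a proper map. -/
open Bornology Topology Filter Function Set

/-!
Split off the finite-dimensional kernel `K` of `l` by a continuous projection `P : H' → K`
(Hahn–Banach). Then `x ↦ (P x, l x)` is injective with closed range, hence a closed embedding by
the open mapping theorem, while `P` maps the bounded set `A'` into a compact subset of `K`;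
together these make `l` proper on `A'`. Adding the compact map `c`, whose values on `A'` lie in a
compact set, preserves properness: along an ultrafilter `c` converges, so `l` converges whenever
`l + c` does.
-/

section Topology

variable {X Y Z : Type*} [TopologicalSpace Y] [TopologicalSpace Z]

theorem IsCompact.exists_tendsto_of_closure_range {f : X → Y} (hf : IsCompact (closure (range f)))
    (𝒰 : Ultrafilter X) : ∃ y, Tendsto f 𝒰 (𝓝 y) :=
  let ⟨y, _, hy⟩ := hf.ultrafilter_le_nhds (𝒰.map f) <|
    tendsto_principal.2 <| Eventually.of_forall fun x ↦ subset_closure (mem_range_self x)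
  ⟨y, hy⟩

theorem IsProperMap.of_prodMk_of_isCompact_closure_range [TopologicalSpace X]
    {p : X → Z} {g : X → Y} (hpg : IsProperMap fun x ↦ (p x, g x))
    (hp : IsCompact (closure (range p))) : IsProperMap g := by
  refine isProperMap_iff_ultrafilter.2 ⟨continuous_snd.comp hpg.continuous, fun 𝒰 y hy ↦ ?_⟩
  obtain ⟨z, hz⟩ := hp.exists_tendsto_of_closure_range 𝒰
  obtain ⟨x, hx, h𝒰⟩ := hpg.ultrafilter_le_nhds_of_tendsto (hz.prodMk_nhds hy)
  exact ⟨x, congrArg Prod.snd hx, h𝒰⟩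

theorem IsProperMap.add_of_isCompact_closure_range [TopologicalSpace X] {G : Type*} [AddGroup G]
    [TopologicalSpace G] [IsTopologicalAddGroup G] [T2Space G] {g h : X → G} (hg : IsProperMap g)
    (hh : Continuous h) (hK : IsCompact (closure (range h))) : IsProperMap fun x ↦ g x + h x := by
  refine isProperMap_iff_ultrafilter.2 ⟨hg.continuous.add hh, fun 𝒰 y hy ↦ ?_⟩
  obtain ⟨z, hz⟩ := hK.exists_tendsto_of_closure_range 𝒰
  obtain ⟨x, hx, h𝒰⟩ := hg.ultrafilter_le_nhds_of_tendsto (by simpa using hy.sub hz)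
  have hhx : h x = z := tendsto_nhds_unique ((hh.tendsto x).mono_left h𝒰) hz
  exact ⟨x, by rw [hx, hhx, sub_add_cancel], h𝒰⟩

end Topology

namespace ContinuousLinearMap

theorem isClosedEmbedding_of_injective_of_isClosed_range {𝕜 E F : Type*}
    [NontriviallyNormedField 𝕜] [NormedAddCommGroup E] [NormedSpace 𝕜 E] [CompleteSpace E]
    [NormedAddCommGroup F] [NormedSpace 𝕜 F] [CompleteSpace F] (f : E →L[𝕜] F)
    (hf : Injective f) (hf' : IsClosed (range f)) : IsClosedEmbedding f :=
  let ⟨_, hK⟩ := f.antilipschitz_of_injective_of_isClosed_range hf hf'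
  hK.isClosedEmbedding f.uniformContinuous

variable {𝕜 E F : Type*} [RCLike 𝕜] [NormedAddCommGroup E] [NormedSpace 𝕜 E] [CompleteSpace E]
  [NormedAddCommGroup F] [NormedSpace 𝕜 F] [CompleteSpace F] (l : E →L[𝕜] F)

theorem isClosedEmbedding_prod_projection_ker
    (hrange : IsClosed (LinearMap.range (l : E →ₗ[𝕜] F) : Set F))
    (P : E →L[𝕜] LinearMap.ker (l : E →ₗ[𝕜] F))
    (hP : ∀ x : LinearMap.ker (l : E →ₗ[𝕜] F), P x = x) :
    IsClosedEmbedding (P.prod l) := by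
  have : CompleteSpace (LinearMap.ker (l : E →ₗ[𝕜] F)) := l.isClosed_ker.completeSpace_coe
  refine (P.prod l).isClosedEmbedding_of_injective_of_isClosed_range ?_ ?_
  · refine (injective_iff_map_eq_zero _).2 fun x hx ↦ ?_
    have hxK : x ∈ LinearMap.ker (l : E →ₗ[𝕜] F) := congrArg Prod.snd hx
    exact congrArg Subtype.val ((hP ⟨x, hxK⟩).symm.trans (congrArg Prod.fst hx))
  · have hl : ∀ k : LinearMap.ker (l : E →ₗ[𝕜] F), l k = 0 := fun k ↦ k.2
    suffices range (P.prod l) = univ ×ˢ range l from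
      this ▸ isClosed_univ.prod (by rwa [LinearMap.coe_range, coe_coe] at hrange)
    refine (range_subset_iff.2 fun x ↦ mk_mem_prod (mem_univ _) (mem_range_self x)).antisymm ?_
    rintro ⟨k, y⟩ ⟨-, x, rfl⟩
    refine ⟨x - P x + k, Prod.ext ?_ ?_⟩
    · simp [hP]
    · simp [hl]

theorem isProperMap_restrict_of_finiteDimensional_ker
    [FiniteDimensional 𝕜 (LinearMap.ker (l : E →ₗ[𝕜] F))]
    (hrange : IsClosed (LinearMap.range (l : E →ₗ[𝕜] F) : Set F))
    {A : Set E} (hA : IsClosed A) (hAb : IsBounded A) :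
    IsProperMap fun a : A ↦ l a := by
  obtain ⟨P, hP⟩ :=
    Submodule.ClosedComplemented.of_finiteDimensional (LinearMap.ker (l : E →ₗ[𝕜] F))
  refine IsProperMap.of_prodMk_of_isCompact_closure_range (p := fun a : A ↦ P a)
    ((l.isClosedEmbedding_prod_projection_ker hrange P hP).isProperMap.restrict hA) ?_
  rw [← image_eq_range]
  exact (P.lipschitz.isBounded_image hAb).isCompact_closure

end ContinuousLinearMap

theorem restriction_of_fredholm_map_to_closed_bounded_is_proper_general
    {H' H : Type*}
    [NormedAddCommGroup H'] [InnerProductSpace ℝ H'] [CompleteSpace H']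
    [NormedAddCommGroup H] [InnerProductSpace ℝ H] [CompleteSpace H]
    (l : H' →L[ℝ] H)
    (hker : FiniteDimensional ℝ (LinearMap.ker (l : H' →ₗ[ℝ] H)))
    (hrange : IsClosed (LinearMap.range (l : H' →ₗ[ℝ] H) : Set H))
    (c : H' → H) (hc : Continuous c)
    (hcpt : ∀ s : Set H', IsBounded s → IsCompact (closure (c '' s)))
    (A' : Set H') (hA : IsClosed A') (hAb : IsBounded A') :
    IsProperMap (fun a : A' => l a + c a) :=
  (l.isProperMap_restrict_of_finiteDimensional_ker hrange hA hAb).add_of_isCompact_closure_range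
    (hc.comp continuous_subtype_val) (by simpa [← image_eq_range] using hcpt A' hAb)

/-- The restriction of a compact perturbation `f = l + c` of a continuous linear
Fredholm map `l` between Hilbert spaces to a closed bounded set `A'` is proper. -/
theorem restriction_of_fredholm_map_to_closed_bounded_is_proper
    {H' H : Type*}
    [NormedAddCommGroup H'] [InnerProductSpace ℝ H'] [CompleteSpace H']
    [NormedAddCommGroup H] [InnerProductSpace ℝ H] [CompleteSpace H]
    (l : H' →L[ℝ] H)
    (hker : FiniteDimensional ℝ (LinearMap.ker (l : H' →ₗ[ℝ] H)))
    (hrange : IsClosed (LinearMap.range (l : H' →ₗ[ℝ] H) : Set H))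
    (hcoker : FiniteDimensional ℝ (H ⧸ LinearMap.range (l : H' →ₗ[ℝ] H)))
    (c : H' → H) (hc : Continuous c)
    (hcpt : ∀ s : Set H', IsBounded s → IsCompact (closure (c '' s)))
    (A' : Set H') (hA : IsClosed A') (hAb : IsBounded A') :
    IsProperMap (fun a : A' => l a + c a) :=
  restriction_of_fredholm_map_to_closed_bounded_is_proper_general l hker hrange c hc hcpt A' hA hAb
end

section
/- Let H' and H be Hilbert spaces, l : H' → H a continuous linear Fredholm map, and c : H' → H a compact map. If f = l + c has the property that preimages of bounded sets in H are bounded in H', then f is a proper map. -/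
/-!
Split `H'` as `ker l ⊕ V` with `V` a closed complement of the finite-dimensional kernel. On `V`
the map `l` is injective with closed range, hence a closed embedding by the open mapping theorem,
while the kernel component of a bounded sequence ranges over a compact set. So a bounded sequence
`xₙ` with `l xₙ` convergent has a convergent subsequence. If instead `l xₙ + c xₙ` converges,
compactness of `c` first makes `c xₙ`, hence `l xₙ`, converge along a subsequence. Preimages of
compact sets are closed and bounded, so they are sequentially compact.
-/

open Bornology Filter Topology Set

namespace ContinuousLinearMap

variable {𝕜 : Type*} {E F : Type*}
  [NormedAddCommGroup E] [NormedAddCommGroup F] [CompleteSpace E] [CompleteSpace F]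

theorem exists_tendsto_of_injective_of_isClosed_range [NontriviallyNormedField 𝕜]
    [NormedSpace 𝕜 E] [NormedSpace 𝕜 F] (g : E →L[𝕜] F)
    (hinj : Function.Injective g) (hrange : IsClosed (range g)) {ι : Type*} {p : Filter ι} [p.NeBot]
    {v : ι → E} {y : F} (hv : Tendsto (g ∘ v) p (𝓝 y)) : ∃ b, Tendsto v p (𝓝 b) := by
  obtain ⟨K, hK⟩ := g.antilipschitz_of_injective_of_isClosed_range hinj hrange
  obtain ⟨b, rfl⟩ := hrange.mem_of_tendsto hv (.of_forall fun _ ↦ mem_range_self _)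
  exact ⟨b, (hK.isClosedEmbedding g.uniformContinuous).tendsto_nhds_iff.2 hv⟩

theorem exists_subseq_tendsto_of_isBounded_of_tendsto [RCLike 𝕜]
    [NormedSpace 𝕜 E] [NormedSpace 𝕜 F] (l : E →L[𝕜] F)
    [FiniteDimensional 𝕜 l.ker] (hrange : IsClosed (range l))
    {x : ℕ → E} (hx : IsBounded (range x)) {y : F} (hy : Tendsto (l ∘ x) atTop (𝓝 y)) :
    ∃ a, ∃ φ : ℕ → ℕ, StrictMono φ ∧ Tendsto (x ∘ φ) atTop (𝓝 a) := by
  obtain ⟨P, hP⟩ := Submodule.ClosedComplemented.of_finiteDimensional l.ker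
  set V := P.ker
  set g := l.comp V.subtypeL
  have hlP : ∀ x, l (P x) = 0 := fun x ↦ (P x).2
  have hsub : ∀ x, x - P x ∈ V := fun x ↦ by simp [V, hP]
  have hgsub : ∀ x, g ⟨x - P x, hsub x⟩ = l x := fun x ↦ by simp [g, hlP]
  have hginj : Function.Injective g := by
    refine (injective_iff_map_eq_zero g).2 fun ⟨v, hvV⟩ hv ↦ ?_
    have hPv : P v = ⟨v, hv⟩ := hP ⟨v, hv⟩
    rw [show P v = 0 from hvV] at hPv
    exact Subtype.ext (congrArg Subtype.val hPv).symm
  have hgrange : range g = range l :=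
    Subset.antisymm (range_subset_iff.2 fun v ↦ mem_range_self (v : E))
      (range_subset_iff.2 fun x ↦ ⟨⟨x - P x, hsub x⟩, hgsub x⟩)
  obtain ⟨b, hb⟩ := g.exists_tendsto_of_injective_of_isClosed_range hginj (hgrange ▸ hrange)
    (v := fun n ↦ ⟨x n - P (x n), hsub (x n)⟩) (by simpa [Function.comp_def, hgsub] using hy)
  have hPx : IsBounded (range (P ∘ x)) := by
    rw [range_comp]; exact P.lipschitz.isBounded_image hx
  obtain ⟨a, -, φ, hφ, ha⟩ := tendsto_subseq_of_bounded hPx (x := P ∘ x) (fun n ↦ mem_range_self n)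
  refine ⟨a + b, φ, hφ, ?_⟩
  have hsum := ((continuous_subtype_val.tendsto _).comp ha).add
    ((continuous_subtype_val.tendsto _).comp (hb.comp hφ.tendsto_atTop))
  simpa [Function.comp_def] using hsum

theorem exists_subseq_tendsto_of_isBounded_of_tendsto_add [RCLike 𝕜]
    [NormedSpace 𝕜 E] [NormedSpace 𝕜 F] (l : E →L[𝕜] F)
    [FiniteDimensional 𝕜 l.ker] (hrange : IsClosed (range l)) {c : E → F}
    (hc : ∀ s : Set E, IsBounded s → IsCompact (closure (c '' s)))
    {x : ℕ → E} (hx : IsBounded (range x)) {z : F}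
    (hz : Tendsto (fun n ↦ l (x n) + c (x n)) atTop (𝓝 z)) :
    ∃ a, ∃ φ : ℕ → ℕ, StrictMono φ ∧ Tendsto (x ∘ φ) atTop (𝓝 a) := by
  obtain ⟨w, -, φ, hφ, hw⟩ := (hc _ hx).tendsto_subseq (x := c ∘ x)
    fun n ↦ subset_closure ⟨x n, mem_range_self n, rfl⟩
  have hlx : Tendsto (l ∘ x ∘ φ) atTop (𝓝 (z - w)) := by
    simpa [Function.comp_def] using (hz.comp hφ.tendsto_atTop).sub hw
  obtain ⟨a, ψ, hψ, ha⟩ := l.exists_subseq_tendsto_of_isBounded_of_tendsto hrange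
    (hx.subset (range_comp_subset_range φ x)) hlx
  exact ⟨a, φ ∘ ψ, hφ.comp hψ, ha⟩

end ContinuousLinearMap

theorem fredholm_map_with_bounded_preimages_is_proper_general
    {H' H : Type*}
    [NormedAddCommGroup H'] [InnerProductSpace ℝ H'] [CompleteSpace H']
    [NormedAddCommGroup H] [InnerProductSpace ℝ H] [CompleteSpace H]
    (l : H' →L[ℝ] H)
    (hker : FiniteDimensional ℝ (LinearMap.ker (l : H' →ₗ[ℝ] H)))
    (hrange : IsClosed (LinearMap.range (l : H' →ₗ[ℝ] H) : Set H))
    (c : H' → H) (hc : Continuous c)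
    (hcpt : ∀ s : Set H', IsBounded s → IsCompact (closure (c '' s)))
    (hbdd : ∀ s : Set H, IsBounded s → IsBounded ((fun x => l x + c x) ⁻¹' s)) :
    IsProperMap (fun x => l x + c x) := by
  have hf : Continuous fun x ↦ l x + c x := l.continuous.add hc
  refine isProperMap_iff_isCompact_preimage.2 ⟨hf, fun K hK ↦ ?_⟩
  have hS : IsBounded ((fun x ↦ l x + c x) ⁻¹' K) := hbdd K hK.isBounded
  refine isCompact_iff_isSeqCompact.2 fun x hx ↦ ?_
  obtain ⟨z, -, φ, hφ, hz⟩ := hK.tendsto_subseq (x := fun n ↦ l (x n) + c (x n)) hx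
  obtain ⟨a, ψ, hψ, ha⟩ := l.exists_subseq_tendsto_of_isBounded_of_tendsto_add
    (LinearMap.coe_range (l : H' →ₗ[ℝ] H) ▸ hrange) hcpt
    (hS.subset (range_subset_iff.2 fun n ↦ hx (φ n))) hz
  exact ⟨a, (hK.isClosed.preimage hf).mem_of_tendsto ha (.of_forall fun n ↦ hx _),
    φ ∘ ψ, hφ.comp hψ, ha⟩

/-- A compact perturbation `f = l + c` of a continuous linear Fredholm map `l`
between Hilbert spaces, with the property that preimages of bounded sets are
bounded, is a proper map. -/
theorem fredholm_map_with_bounded_preimages_is_proper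
    {H' H : Type*}
    [NormedAddCommGroup H'] [InnerProductSpace ℝ H'] [CompleteSpace H']
    [NormedAddCommGroup H] [InnerProductSpace ℝ H] [CompleteSpace H]
    (l : H' →L[ℝ] H)
    (hker : FiniteDimensional ℝ (LinearMap.ker (l : H' →ₗ[ℝ] H)))
    (hrange : IsClosed (LinearMap.range (l : H' →ₗ[ℝ] H) : Set H))
    (hcoker : FiniteDimensional ℝ (H ⧸ LinearMap.range (l : H' →ₗ[ℝ] H)))
    (c : H' → H) (hc : Continuous c)
    (hcpt : ∀ s : Set H', IsBounded s → IsCompact (closure (c '' s)))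
    (hbdd : ∀ s : Set H, IsBounded s → IsBounded ((fun x => l x + c x) ⁻¹' s)) :
    IsProperMap (fun x => l x + c x) :=
  fredholm_map_with_bounded_preimages_is_proper_general l hker hrange c hc hcpt hbdd
end

section
/- There exists a proper continuous map f : H → H on an infinite-dimensional separable Hilbert space H of the form f = id + c with c compact, such that f does not satisfy the boundedness condition: the preimage under f of the closed unit ball is unbounded. -/
/-!
Take an orthonormal sequence `e n` and place disjoint spikes of radius `1 / 2` at the points
`(n + 1) • e n`, with `c = -n • e n` at the tip, so that `f ((n + 1) • e n) = e n` and the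
preimage of the unit ball contains points of every norm. Each value `c x` lies on a segment
`[0, -n • e n]` with `n ≤ ‖x‖`, so `c` maps bounded sets into finitely many segments. The `n`-th
spike is mapped by `f` into the half-space `⟪y, e n⟫ ≥ 1 / 2`, which a compact set avoids for large
`n` by Bessel's inequality; so preimages of compact sets are bounded, and a bounded preimage `S` of
a compact set `K` is compact because it is closed and contained in `K - closure (c '' S)`.
-/

open Bornology Metric Filter Topology

theorem exists_orthonormal_nat_of_not_finiteDimensional {𝕜 E : Type*} [RCLike 𝕜]
    [NormedAddCommGroup E] [InnerProductSpace 𝕜 E] (hE : ¬ FiniteDimensional 𝕜 E) :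
    ∃ e : ℕ → E, Orthonormal 𝕜 e := by
  obtain ⟨v, -, hv, hmax⟩ := exists_maximal_orthonormal (orthonormal_empty 𝕜 E)
  have hinf : v.Infinite := by
    intro hfin
    have : FiniteDimensional 𝕜 (Submodule.span 𝕜 v) := FiniteDimensional.span_of_finite 𝕜 hfin
    have htop : Submodule.span 𝕜 v = ⊤ := Submodule.orthogonal_eq_bot_iff.mp
      ((maximal_orthonormal_iff_orthogonalComplement_eq_bot hv).mp hmax)
    exact hE (Module.finite_def.mpr (htop ▸ Submodule.fg_span hfin))
  exact ⟨fun n => hinf.natEmbedding v n, hv.comp _ (hinf.natEmbedding v).injective⟩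

theorem Orthonormal.eventually_forall_norm_inner_lt {𝕜 E : Type*} [RCLike 𝕜]
    [NormedAddCommGroup E] [InnerProductSpace 𝕜 E] {e : ℕ → E} (he : Orthonormal 𝕜 e)
    {K : Set E} (hK : IsCompact K) {ε : ℝ} (hε : 0 < ε) :
    ∀ᶠ n in atTop, ∀ y ∈ K, ‖(inner 𝕜 (e n) y : 𝕜)‖ < ε := by
  obtain ⟨t, htK, ht, hKt⟩ := hK.finite_cover_balls (half_pos hε)
  have hpoint : ∀ z, Tendsto (fun n => ‖(inner 𝕜 (e n) z : 𝕜)‖) atTop (𝓝 0) := fun z => by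
    simpa using (he.inner_products_summable (x := z)).tendsto_atTop_zero.sqrt
  filter_upwards [(ht.eventually_all).mpr fun z _ => (hpoint z).eventually_lt_const (half_pos hε)]
    with n hn y hy
  obtain ⟨z, hz, hyz⟩ := Set.mem_iUnion₂.mp (hKt hy)
  calc ‖(inner 𝕜 (e n) y : 𝕜)‖ ≤ ‖(inner 𝕜 (e n) z : 𝕜)‖ + ‖(inner 𝕜 (e n) (y - z) : 𝕜)‖ := by
        simpa [inner_sub_right] using norm_le_insert' (inner 𝕜 (e n) y) (inner 𝕜 (e n) z)
    _ < ε / 2 + ε / 2 := by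
        gcongr
        · exact hn z hz
        · calc ‖(inner 𝕜 (e n) (y - z) : 𝕜)‖ ≤ ‖e n‖ * ‖y - z‖ := norm_inner_le_norm _ _
            _ < ε / 2 := by rw [he.1 n, one_mul, ← dist_eq_norm]; exact hyz
    _ = ε := add_halves ε

theorem isCompact_preimage_add_of_isBounded {E : Type*} [NormedAddCommGroup E] {c : E → E}
    (hc : Continuous c) (hcomp : ∀ s : Set E, IsBounded s → IsCompact (closure (c '' s)))
    {K : Set E} (hK : IsCompact K) (hbdd : IsBounded ((fun x => x + c x) ⁻¹' K)) :
    IsCompact ((fun x => x + c x) ⁻¹' K) := by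
  refine (hK.add (hcomp _ hbdd).neg).of_isClosed_subset
    (hK.isClosed.preimage (continuous_id.add hc)) fun x hx => ?_
  exact ⟨x + c x, hx, -c x, by simpa using subset_closure (Set.mem_image_of_mem c hx),
    add_neg_cancel_right x (c x)⟩

namespace SpikePerturbation

variable {E : Type*} [NormedAddCommGroup E]

def tent (y : E) : ℝ := max (1 - 2 * ‖y‖) 0

lemma tent_nonneg (y : E) : 0 ≤ tent y := le_max_right _ _

lemma tent_le_one (y : E) : tent y ≤ 1 := max_le (by linarith [norm_nonneg y]) zero_le_one

lemma tent_zero : tent (0 : E) = 1 := by simp [tent]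

lemma continuous_tent : Continuous (tent : E → ℝ) := by unfold tent; fun_prop

lemma tent_eq_zero_of_half_le_norm {y : E} (hy : 1 / 2 ≤ ‖y‖) : tent y = 0 :=
  max_eq_right (by linarith)

variable [InnerProductSpace ℝ E] (e : ℕ → E)

def center (n : ℕ) : E := ((n : ℝ) + 1) • e n

def spike (n : ℕ) (x : E) : E := tent (x - center e n) • (-(n : ℝ) • e n)

noncomputable def perturbation (x : E) : E := ∑ᶠ n, spike e n x

variable {e}

lemma spike_eq_zero_of_notMem_ball {n : ℕ} {x : E} (hx : x ∉ ball (center e n) (1 / 2)) :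
    spike e n x = 0 := by
  rw [spike, tent_eq_zero_of_half_le_norm (by simpa [dist_eq_norm] using hx), zero_smul]

lemma spike_mem_image_Icc (n : ℕ) (x : E) :
    spike e n x ∈ (fun t : ℝ => t • (-(n : ℝ) • e n)) '' Set.Icc 0 1 :=
  ⟨_, ⟨tent_nonneg _, tent_le_one _⟩, rfl⟩

lemma continuous_spike (n : ℕ) : Continuous (spike e n) :=
  (continuous_tent.comp (continuous_sub_right _)).smul continuous_const

lemma norm_center (he : Orthonormal ℝ e) (n : ℕ) : ‖center e n‖ = n + 1 := by
  rw [center, norm_smul, he.1 n, mul_one, Real.norm_of_nonneg (by positivity)]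

lemma inner_center (he : Orthonormal ℝ e) (m n : ℕ) :
    inner ℝ (center e m) (e n) = if m = n then (n : ℝ) + 1 else 0 := by
  rw [center, real_inner_smul_left, orthonormal_iff_ite.mp he]
  split_ifs with h <;> simp [h]

lemma natCast_lt_norm_of_mem_ball (he : Orthonormal ℝ e) {n : ℕ} {x : E}
    (hx : x ∈ ball (center e n) (1 / 2)) : (n : ℝ) < ‖x‖ := by
  have htri := norm_le_insert' (center e n) x
  rw [norm_center he, ← dist_eq_norm, dist_comm] at htri
  linarith [mem_ball.mp hx]

lemma eq_of_mem_ball_center (he : Orthonormal ℝ e) {m n : ℕ} {x : E}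
    (hm : x ∈ ball (center e m) (1 / 2)) (hn : x ∈ ball (center e n) (1 / 2)) : m = n := by
  by_contra hmn
  have hsep : (1 : ℝ) ≤ dist (center e m) (center e n) :=
    calc (1 : ℝ) ≤ inner ℝ (center e m - center e n) (e m) := by
          simp [inner_sub_left, inner_center he, Ne.symm hmn]
      _ ≤ ‖center e m - center e n‖ * ‖e m‖ := real_inner_le_norm _ _
      _ = dist (center e m) (center e n) := by rw [he.1 m, mul_one, dist_eq_norm]
  linarith [dist_triangle_left (center e m) (center e n) x, mem_ball.mp hm, mem_ball.mp hn]

lemma perturbation_eq_spike (he : Orthonormal ℝ e) {n : ℕ} {x : E}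
    (hx : x ∈ ball (center e n) (1 / 2)) : perturbation e x = spike e n x :=
  finsum_eq_single _ n fun _ hm =>
    spike_eq_zero_of_notMem_ball fun hm' => hm (eq_of_mem_ball_center he hm' hx)

lemma perturbation_eq_zero {x : E} (hx : ∀ n, x ∉ ball (center e n) (1 / 2)) :
    perturbation e x = 0 :=
  finsum_eq_zero_of_forall_eq_zero fun n => spike_eq_zero_of_notMem_ball (hx n)

lemma exists_perturbation_eq_spike (he : Orthonormal ℝ e) (x : E) :
    ∃ n : ℕ, (n : ℝ) ≤ ‖x‖ ∧ perturbation e x = spike e n x := by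
  by_cases hx : ∃ n, x ∈ ball (center e n) (1 / 2)
  · obtain ⟨n, hn⟩ := hx
    exact ⟨n, (natCast_lt_norm_of_mem_ball he hn).le, perturbation_eq_spike he hn⟩
  · -- away from all spikes take `n = 0`: `spike e 0` has amplitude `0`
    refine ⟨0, by simp, ?_⟩
    rw [perturbation_eq_zero (not_exists.mp hx)]
    simp [spike]

lemma locallyFinite_support_spike (he : Orthonormal ℝ e) :
    LocallyFinite fun n => Function.support (spike e n) := by
  intro x
  refine ⟨ball x 1, ball_mem_nhds x one_pos, (Set.finite_Iio ⌈‖x‖ + 1⌉₊).subset ?_⟩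
  rintro n ⟨y, hyn, hyx⟩
  have hy : y ∈ ball (center e n) (1 / 2) := by_contra fun h => hyn (spike_eq_zero_of_notMem_ball h)
  have hny := natCast_lt_norm_of_mem_ball he hy
  have htri := norm_le_insert' y x
  rw [← dist_eq_norm] at htri
  exact Nat.lt_ceil.mpr (by linarith [mem_ball.mp hyx])

lemma continuous_perturbation (he : Orthonormal ℝ e) : Continuous (perturbation e) :=
  continuous_finsum continuous_spike (locallyFinite_support_spike he)

lemma isCompact_closure_image_perturbation (he : Orthonormal ℝ e) {s : Set E}
    (hs : IsBounded s) : IsCompact (closure (perturbation e '' s)) := by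
  obtain ⟨R, hR⟩ := hs.subset_closedBall 0
  have hT : IsCompact (⋃ n ≤ ⌊R⌋₊, (fun t : ℝ => t • (-(n : ℝ) • e n)) '' Set.Icc 0 1) :=
    (Set.finite_le_nat _).isCompact_biUnion fun n _ => isCompact_Icc.image (by fun_prop)
  refine hT.of_isClosed_subset isClosed_closure (closure_minimal ?_ hT.isClosed)
  rintro _ ⟨x, hx, rfl⟩
  obtain ⟨n, hn, hxn⟩ := exists_perturbation_eq_spike he x
  have hxR : ‖x‖ ≤ R := by simpa using hR hx
  exact Set.mem_biUnion (Nat.le_floor (hn.trans hxR)) (hxn ▸ spike_mem_image_Icc n x)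

lemma center_add_perturbation_center (he : Orthonormal ℝ e) (n : ℕ) :
    center e n + perturbation e (center e n) = e n := by
  rw [perturbation_eq_spike he (mem_ball_self one_half_pos), spike, sub_self, tent_zero, one_smul,
    center, ← add_smul]
  simp

lemma half_le_inner_add_perturbation (he : Orthonormal ℝ e) {n : ℕ} {x : E}
    (hx : x ∈ ball (center e n) (1 / 2)) : 1 / 2 ≤ inner ℝ (x + perturbation e x) (e n) := by
  have hdev : |inner ℝ (x - center e n) (e n)| ≤ 1 / 2 := by
    calc |inner ℝ (x - center e n) (e n)| ≤ ‖x - center e n‖ * ‖e n‖ := abs_real_inner_le_norm _ _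
      _ ≤ 1 / 2 := by rw [he.1 n, mul_one, ← dist_eq_norm]; exact (mem_ball.mp hx).le
  have hspike : inner ℝ (perturbation e x) (e n) = -(tent (x - center e n) * n) := by
    rw [perturbation_eq_spike he hx, spike, real_inner_smul_left, real_inner_smul_left,
      real_inner_self_eq_norm_sq, he.1 n]
    ring
  have hx_eq : inner ℝ x (e n) = inner ℝ (x - center e n) (e n) + (n + 1) := by
    rw [inner_sub_left, inner_center he, if_pos rfl]
    ring
  have := mul_le_mul_of_nonneg_right (tent_le_one (x - center e n)) (Nat.cast_nonneg (α := ℝ) n)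
  rw [inner_add_left, hspike, hx_eq]
  linarith [(abs_le.mp hdev).1]

lemma isBounded_preimage_add_perturbation (he : Orthonormal ℝ e) {K : Set E} (hK : IsCompact K) :
    IsBounded ((fun x => x + perturbation e x) ⁻¹' K) := by
  obtain ⟨R, hR⟩ := hK.isBounded.exists_norm_le
  obtain ⟨N, hN⟩ := eventually_atTop.mp
    (he.eventually_forall_norm_inner_lt hK (one_half_pos (α := ℝ)))
  refine isBounded_iff_forall_norm_le.mpr ⟨max R (N + 1), fun x hx => ?_⟩
  by_cases hball : ∃ n, x ∈ ball (center e n) (1 / 2)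
  · obtain ⟨n, hn⟩ := hball
    have hnN : n < N := by
      by_contra! hNn
      have hsmall := hN n hNn _ hx
      rw [real_inner_comm, Real.norm_eq_abs] at hsmall
      linarith [half_le_inner_add_perturbation he hn,
        le_abs_self (inner ℝ (x + perturbation e x) (e n))]
    have hxn := norm_le_insert' x (center e n)
    rw [norm_center he, ← dist_eq_norm] at hxn
    have : (n : ℝ) + 1 ≤ N := by exact_mod_cast hnN
    exact le_max_of_le_right (by linarith [mem_ball.mp hn])
  · have hfx : ‖x + perturbation e x‖ ≤ R := hR _ hx
    rw [perturbation_eq_zero (not_exists.mp hball), add_zero] at hfx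
    exact le_max_of_le_left hfx

lemma isProperMap_add_perturbation (he : Orthonormal ℝ e) :
    IsProperMap fun x => x + perturbation e x :=
  isProperMap_iff_isCompact_preimage.mpr ⟨continuous_id.add (continuous_perturbation he),
    fun _ hK => isCompact_preimage_add_of_isBounded (continuous_perturbation he)
      (fun _ => isCompact_closure_image_perturbation he) hK
      (isBounded_preimage_add_perturbation he hK)⟩

lemma not_isBounded_preimage_add_perturbation_closedBall (he : Orthonormal ℝ e) :
    ¬ IsBounded ((fun x => x + perturbation e x) ⁻¹' closedBall 0 1) := by
  intro hbdd
  obtain ⟨R, hR⟩ := hbdd.exists_norm_le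
  obtain ⟨n, hn⟩ := exists_nat_gt R
  have hcenter := hR (center e n) (by simp [center_add_perturbation_center he, he.1 n])
  rw [norm_center he] at hcenter
  linarith

end SpikePerturbation

theorem exists_proper_compact_perturbation_of_id_with_unbounded_preimage_general
    {H : Type*}
    [NormedAddCommGroup H] [InnerProductSpace ℝ H]
    (hinf : ¬ FiniteDimensional ℝ H) :
    ∃ c : H → H, Continuous c ∧
      (∀ s : Set H, IsBounded s → IsCompact (closure (c '' s))) ∧
      IsProperMap (fun x => x + c x) ∧
      ¬ IsBounded ((fun x => x + c x) ⁻¹' Metric.closedBall (0 : H) 1) := by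
  obtain ⟨e, he⟩ := exists_orthonormal_nat_of_not_finiteDimensional hinf
  exact ⟨SpikePerturbation.perturbation e, SpikePerturbation.continuous_perturbation he,
    fun _ => SpikePerturbation.isCompact_closure_image_perturbation he,
    SpikePerturbation.isProperMap_add_perturbation he,
    SpikePerturbation.not_isBounded_preimage_add_perturbation_closedBall he⟩

/-- On any infinite-dimensional separable Hilbert space there is a proper
continuous map `f = id + c` with `c` compact such that the preimage of the
closed unit ball under `f` is unbounded. -/
theorem exists_proper_compact_perturbation_of_id_with_unbounded_preimage
    {H : Type*}
    [NormedAddCommGroup H] [InnerProductSpace ℝ H] [CompleteSpace H]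
    [TopologicalSpace.SeparableSpace H]
    (hinf : ¬ FiniteDimensional ℝ H) :
    ∃ c : H → H, Continuous c ∧
      (∀ s : Set H, IsBounded s → IsCompact (closure (c '' s))) ∧
      IsProperMap (fun x => x + c x) ∧
      ¬ IsBounded ((fun x => x + c x) ⁻¹' Metric.closedBall (0 : H) 1) :=
  exists_proper_compact_perturbation_of_id_with_unbounded_preimage_general hinf
end

section
/- Let l : H' → H be a continuous linear Fredholm map between Hilbert spaces, c : H' → H compact with f = l + c satisfying that preimages of bounded sets are bounded. Then there exists a finite-dimensional linear subspace V ⊆ H such that V together with the image of l spans H, i.e. H = im(l) + V, and the restriction of f to l⁻¹(W) misses the unit sphere of W^⊥ for every finite-dimensional subspace W ⊇ V. -/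
open Bornology Metric

/-!
Suppose no such `V` exists. Starting from a finite-dimensional complement of `range l`, one can
then keep enlarging a finite-dimensional subspace so that it contains `l x` and `f x` for all
points `x` chosen so far, and find a new point `y` with `‖f y‖ = 1` and `f y` orthogonal to
everything chosen before and to `l y`. Pairing with `f y` shows `‖c y - c x‖ ≥ 1` for every
earlier `x`. So `c` maps the bounded set `f⁻¹(sphere 0 1)` onto a set containing an infinite
`1`-separated sequence, contradicting the compactness of `c`.
-/

lemma TotallyBounded.exists_lt_dist_lt {α : Type*} [PseudoMetricSpace α] {s : Set α}
    (hs : TotallyBounded s) {u : ℕ → α} (hu : ∀ n, u n ∈ s) {ε : ℝ} (hε : 0 < ε) :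
    ∃ m n, m < n ∧ dist (u m) (u n) < ε := by
  obtain ⟨t, ht, hcover⟩ := totallyBounded_iff.1 hs (ε / 2) (half_pos hε)
  choose y hyt hy using fun n => Set.mem_iUnion₂.1 (hcover (hu n))
  obtain ⟨m, n, hmn, hyeq⟩ := ht.exists_lt_map_eq_of_forall_mem hyt
  refine ⟨m, n, hmn, ?_⟩
  calc dist (u m) (u n) ≤ dist (u m) (y m) + dist (u n) (y m) := dist_triangle_right _ _ _
    _ < ε / 2 + ε / 2 := add_lt_add (hy m) (hyeq ▸ hy n)
    _ = ε := add_halves ε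

section InnerProductSpace

variable {E : Type*} [NormedAddCommGroup E] [InnerProductSpace ℝ E]

lemma one_le_norm_sub_of_inner_eq_zero {a p b q : E} (hnorm : ‖a + p‖ = 1)
    (ha : inner ℝ (a + p) a = 0) (hb : inner ℝ (a + p) b = 0)
    (hbq : inner ℝ (a + p) (b + q) = 0) : 1 ≤ ‖q - p‖ := by
  have hinner : inner ℝ (a + p) (p - q) = 1 := by
    rw [show p - q = (a + p) - a - ((b + q) - b) by abel, inner_sub_right, inner_sub_right,
      inner_sub_right, real_inner_self_eq_norm_sq, hnorm, ha, hb, hbq]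
    norm_num
  calc 1 = inner ℝ (a + p) (p - q) := hinner.symm
    _ ≤ ‖a + p‖ * ‖p - q‖ := real_inner_le_norm _ _
    _ = ‖q - p‖ := by rw [hnorm, one_mul, norm_sub_rev]

theorem exists_le_finiteDimensional_avoiding_sphere {X : Type*} (l c : X → E)
    (hc : TotallyBounded (c '' ((fun x => l x + c x) ⁻¹' sphere 0 1)))
    (V₀ : Submodule ℝ E) [FiniteDimensional ℝ V₀] :
    ∃ V : Submodule ℝ E, FiniteDimensional ℝ V ∧ V₀ ≤ V ∧
      ∀ W : Submodule ℝ E, FiniteDimensional ℝ W → V ≤ W →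
        ∀ x : X, l x ∈ W → ¬(l x + c x ∈ Wᗮ ∧ ‖l x + c x‖ = 1) := by
  classical
  by_contra! hbad
  set S := (fun x => l x + c x) ⁻¹' sphere 0 1
  obtain ⟨u, huS, hsep⟩ := exists_seq_of_forall_finset_exists (· ∈ S)
    (fun x y => 1 ≤ dist (c x) (c y)) fun s _ => by
      let V := V₀ ⊔ Submodule.span ℝ ↑(s.image l ∪ s.image fun x => l x + c x)
      obtain ⟨W, hW, hVW, y, hly, hfy, hnorm⟩ := hbad V inferInstance le_sup_left
      have hspan : ∀ x ∈ s, l x ∈ W ∧ l x + c x ∈ W := fun x hx =>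
        ⟨hVW <| Submodule.mem_sup_right <| Submodule.subset_span <|
            Finset.mem_union_left _ (Finset.mem_image_of_mem _ hx),
          hVW <| Submodule.mem_sup_right <| Submodule.subset_span <|
            Finset.mem_union_right _ (Finset.mem_image_of_mem _ hx)⟩
      refine ⟨y, by simpa [S] using hnorm, fun x hx => ?_⟩
      rw [dist_eq_norm]
      exact one_le_norm_sub_of_inner_eq_zero hnorm (Submodule.inner_left_of_mem_orthogonal hly hfy)
        (Submodule.inner_left_of_mem_orthogonal (hspan x hx).1 hfy)
        (Submodule.inner_left_of_mem_orthogonal (hspan x hx).2 hfy)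
  obtain ⟨m, n, hmn, hdist⟩ :=
    hc.exists_lt_dist_lt (u := c ∘ u) (fun n => Set.mem_image_of_mem c (huS n)) one_pos
  exact (hsep m n hmn).not_gt hdist

end InnerProductSpace

theorem exists_finrank_subspace_sphere_avoidance_general
    {H' H : Type*}
    [NormedAddCommGroup H'] [InnerProductSpace ℝ H']
    [NormedAddCommGroup H] [InnerProductSpace ℝ H]
    (l : H' →L[ℝ] H)
    (hcoker : FiniteDimensional ℝ (H ⧸ LinearMap.range (l : H' →ₗ[ℝ] H)))
    (c : H' → H)
    (hcpt : ∀ s : Set H', IsBounded s → IsCompact (closure (c '' s)))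
    (hbdd : ∀ s : Set H, IsBounded s → IsBounded ((fun x => l x + c x) ⁻¹' s)) :
    ∃ V : Submodule ℝ H, FiniteDimensional ℝ V ∧
      LinearMap.range (l : H' →ₗ[ℝ] H) ⊔ V = ⊤ ∧
      ∀ W : Submodule ℝ H, FiniteDimensional ℝ W → V ≤ W →
        ∀ x : H', l x ∈ W → ¬(l x + c x ∈ Wᗮ ∧ ‖l x + c x‖ = 1) := by
  obtain ⟨V₀, hV₀⟩ := Submodule.exists_isCompl (LinearMap.range (l : H' →ₗ[ℝ] H))
  have : FiniteDimensional ℝ V₀ := Module.Finite.equiv (Submodule.quotientEquivOfIsCompl _ _ hV₀)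
  have hK : TotallyBounded (c '' ((fun x => l x + c x) ⁻¹' sphere 0 1)) :=
    (hcpt _ (hbdd _ isBounded_sphere)).totallyBounded.subset subset_closure
  obtain ⟨V, hV, hV₀V, havoid⟩ := exists_le_finiteDimensional_avoiding_sphere l c hK V₀
  exact ⟨V, hV, eq_top_iff.2 (hV₀.sup_eq_top ▸ sup_le_sup_left hV₀V _), havoid⟩

/-- For a compact perturbation `f = l + c` of a continuous linear Fredholm map
between Hilbert spaces with bounded preimages of bounded sets, there is a
finite-dimensional subspace `V ⊆ H` spanning `H` together with the image of `l`,
such that for every finite-dimensional `W ⊇ V` the image of `l⁻¹(W)` under `f`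
misses the unit sphere of `W^⊥`. -/
theorem exists_finrank_subspace_sphere_avoidance
    {H' H : Type*}
    [NormedAddCommGroup H'] [InnerProductSpace ℝ H'] [CompleteSpace H']
    [NormedAddCommGroup H] [InnerProductSpace ℝ H] [CompleteSpace H]
    (l : H' →L[ℝ] H)
    (hker : FiniteDimensional ℝ (LinearMap.ker (l : H' →ₗ[ℝ] H)))
    (hrange : IsClosed (LinearMap.range (l : H' →ₗ[ℝ] H) : Set H))
    (hcoker : FiniteDimensional ℝ (H ⧸ LinearMap.range (l : H' →ₗ[ℝ] H)))
    (c : H' → H) (hc : Continuous c)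
    (hcpt : ∀ s : Set H', IsBounded s → IsCompact (closure (c '' s)))
    (hbdd : ∀ s : Set H, IsBounded s → IsBounded ((fun x => l x + c x) ⁻¹' s)) :
    ∃ V : Submodule ℝ H, FiniteDimensional ℝ V ∧
      LinearMap.range (l : H' →ₗ[ℝ] H) ⊔ V = ⊤ ∧
      ∀ W : Submodule ℝ H, FiniteDimensional ℝ W → V ≤ W →
        ∀ x : H', l x ∈ W → ¬(l x + c x ∈ Wᗮ ∧ ‖l x + c x‖ = 1) :=
  exists_finrank_subspace_sphere_avoidance_general l hcoker c hcpt hbdd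
end

section
/- In the setting of the previous lemma, the subspaces V ⊆ H satisfying H = im(l) + V and the sphere-avoidance property are cofinal in the directed system of finite-dimensional linear subspaces of a separable Hilbert space H: every finite-dimensional subspace of H is contained in such a V. -/
open Bornology Metric

/-! The image under `c` of `f⁻¹(closed unit ball)` is relatively compact, hence covered by
finitely many open balls of radius `1` centred at points of a finite set `t`. Take `V` spanned
by `U`, a finite-dimensional complement of `im l`, and `t`. If `l x ∈ W ⊇ V` and `c x` is within
distance `1` of `y ∈ t ⊆ W`, then `l x + y ∈ W`, so a vector `f x ∈ Wᗮ` satisfies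
`‖f x‖ ≤ ‖f x - (l x + y)‖ = ‖c x - y‖ < 1`. -/

theorem Submodule.exists_finiteDimensional_isCompl {K V : Type*} [DivisionRing K]
    [AddCommGroup V] [Module K V] (p : Submodule K V) [FiniteDimensional K (V ⧸ p)] :
    ∃ q : Submodule K V, IsCompl p q ∧ FiniteDimensional K q :=
  let ⟨q, hq⟩ := p.exists_isCompl
  ⟨q, hq, (p.quotientEquivOfIsCompl q hq).finiteDimensional⟩

theorem Submodule.norm_le_norm_sub_of_mem_orthogonal {E : Type*} [NormedAddCommGroup E]
    [InnerProductSpace ℝ E] {W : Submodule ℝ E} {v w : E} (hv : v ∈ Wᗮ) (hw : w ∈ W) :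
    ‖v‖ ≤ ‖v - w‖ := by
  have h := norm_sub_sq_eq_norm_sq_add_norm_sq_real (W.inner_left_of_mem_orthogonal hw hv)
  nlinarith [norm_nonneg v, norm_nonneg (v - w), mul_self_nonneg ‖w‖]

theorem sphere_avoidance_subspaces_cofinal_general
    {H' H : Type*}
    [NormedAddCommGroup H'] [InnerProductSpace ℝ H']
    [NormedAddCommGroup H] [InnerProductSpace ℝ H]
    (l : H' →L[ℝ] H)
    (hcoker : FiniteDimensional ℝ (H ⧸ LinearMap.range (l : H' →ₗ[ℝ] H)))
    (c : H' → H)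
    (hcpt : ∀ s : Set H', IsBounded s → IsCompact (closure (c '' s)))
    (hbdd : ∀ s : Set H, IsBounded s → IsBounded ((fun x => l x + c x) ⁻¹' s)) :
    ∀ U : Submodule ℝ H, FiniteDimensional ℝ U →
      ∃ V : Submodule ℝ H, U ≤ V ∧ FiniteDimensional ℝ V ∧
        LinearMap.range (l : H' →ₗ[ℝ] H) ⊔ V = ⊤ ∧
        ∀ W : Submodule ℝ H, FiniteDimensional ℝ W → V ≤ W →
          ∀ x : H', l x ∈ W → ¬(l x + c x ∈ Wᗮ ∧ ‖l x + c x‖ = 1) := by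
  intro U hU
  obtain ⟨Q, hQ, hQfin⟩ := (LinearMap.range (l : H' →ₗ[ℝ] H)).exists_finiteDimensional_isCompl
  have hnet : TotallyBounded (c '' ((fun x => l x + c x) ⁻¹' closedBall 0 1)) :=
    (hcpt _ (hbdd _ isBounded_closedBall)).totallyBounded.subset subset_closure
  obtain ⟨t, htfin, htcov⟩ := totallyBounded_iff.1 hnet 1 one_pos
  have htspan : FiniteDimensional ℝ (Submodule.span ℝ t) :=
    FiniteDimensional.span_of_finite ℝ htfin
  refine ⟨U ⊔ Q ⊔ Submodule.span ℝ t, le_sup_left.trans le_sup_left, inferInstance,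
    eq_top_mono (sup_le_sup_left (le_sup_right.trans le_sup_left) _) hQ.sup_eq_top, ?_⟩
  rintro W - hVW x hlx ⟨hfx, hnorm⟩
  obtain ⟨y, hyt, hxy⟩ := Set.mem_iUnion₂.1 (htcov ⟨x, by simp [hnorm], rfl⟩)
  have hyW : y ∈ W := hVW (Submodule.mem_sup_right (Submodule.subset_span hyt))
  have hle := Submodule.norm_le_norm_sub_of_mem_orthogonal hfx (W.add_mem hlx hyW)
  rw [add_sub_add_left_eq_sub, hnorm, ← dist_eq_norm] at hle
  exact (mem_ball.1 hxy).not_ge hle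

/-- In a separable Hilbert space `H`, the finite-dimensional subspaces `V`
satisfying `H = im(l) + V` and the sphere-avoidance property are cofinal in the
directed system of finite-dimensional subspaces of `H`. -/
theorem sphere_avoidance_subspaces_cofinal
    {H' H : Type*}
    [NormedAddCommGroup H'] [InnerProductSpace ℝ H'] [CompleteSpace H']
    [NormedAddCommGroup H] [InnerProductSpace ℝ H] [CompleteSpace H]
    [TopologicalSpace.SeparableSpace H]
    (l : H' →L[ℝ] H)
    (hker : FiniteDimensional ℝ (LinearMap.ker (l : H' →ₗ[ℝ] H)))
    (hrange : IsClosed (LinearMap.range (l : H' →ₗ[ℝ] H) : Set H))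
    (hcoker : FiniteDimensional ℝ (H ⧸ LinearMap.range (l : H' →ₗ[ℝ] H)))
    (c : H' → H) (hc : Continuous c)
    (hcpt : ∀ s : Set H', IsBounded s → IsCompact (closure (c '' s)))
    (hbdd : ∀ s : Set H, IsBounded s → IsBounded ((fun x => l x + c x) ⁻¹' s)) :
    ∀ U : Submodule ℝ H, FiniteDimensional ℝ U →
      ∃ V : Submodule ℝ H, U ≤ V ∧ FiniteDimensional ℝ V ∧
        LinearMap.range (l : H' →ₗ[ℝ] H) ⊔ V = ⊤ ∧
        ∀ W : Submodule ℝ H, FiniteDimensional ℝ W → V ≤ W →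
          ∀ x : H', l x ∈ W → ¬(l x + c x ∈ Wᗮ ∧ ‖l x + c x‖ = 1) :=
  sphere_avoidance_subspaces_cofinal_general l hcoker c hcpt hbdd
end
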